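/- arXiv:2005.06311 — 4 statements merged into one kernel-verified Lean document; each statement's English description precedes it below -/
import Mathlib

section
/- Let h : [0,1] → [0,1] be monotone nondecreasing and 2-Lipschitz (i.e., |h(x) − h(y)| ≤ 2|x−y|). For q ∈ [0,1], write q = q̄ + z/n with q̄ a multiple of 1/n, z ∈ [0,1), and q̂ = q̄ + 1/n. If h is linear on [q̄, q̂], then with H(q) = q·h(q) − ∫₀^q h(y) dy, we have −3/(4n²) ≤ H(q) − ((1−z)·H(q̄) + z·H(q̂)) ≤ 0. -/
open Set intervalIntegral

/-!
On a grid cell `[a, b]` where `h` has slope `s`, the function `H t = t h t - ∫ h` is a quadratic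
polynomial in `t` with leading coefficient `s / 2`. Its linear interpolation error at
`a + z (b - a)` is therefore `-(s / 2) z (1 - z) (b - a)²`, which lies in `[-(b - a)² / 4, 0]`
because monotonicity and the Lipschitz bound give `0 ≤ s ≤ 2`.
-/

section AffinePiece

variable {h H : ℝ → ℝ} {c a b s t : ℝ}

theorem integral_eq_of_affineOn (hat : a ≤ t)
    (haff : ∀ x ∈ Icc a t, h x = h a + s * (x - a)) :
    ∫ y in a..t, h y = h a * (t - a) + s / 2 * (t - a) ^ 2 := by
  have hlin : Continuous fun y => s * (y - a) := by fun_prop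
  rw [integral_congr (g := fun y => h a + s * (y - a)) fun y hy => haff y (uIcc_of_le hat ▸ hy),
    integral_add intervalIntegrable_const (hlin.intervalIntegrable _ _)]
  simp only [integral_const, integral_const_mul, integral_comp_sub_right fun y => y, integral_id,
    smul_eq_mul]
  ring

theorem mul_sub_integral_eq_of_affineOn (hint : IntervalIntegrable h MeasureTheory.volume c a)
    (hH : ∀ t, H t = t * h t - ∫ y in c..t, h y) (hat : a ≤ t)
    (haff : ∀ x ∈ Icc a t, h x = h a + s * (x - a)) :
    H t = H a + a * s * (t - a) + s / 2 * (t - a) ^ 2 := by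
  have hint' : IntervalIntegrable h MeasureTheory.volume a t := by
    have haffine_cont : Continuous fun x => h a + s * (x - a) := by fun_prop
    refine ContinuousOn.intervalIntegrable ?_
    rw [uIcc_of_le hat]
    exact haffine_cont.continuousOn.congr haff
  rw [hH, hH, ← integral_add_adjacent_intervals hint hint', integral_eq_of_affineOn hat haff,
    haff t ⟨hat, le_rfl⟩]
  ring

theorem mul_sub_integral_interpolation_error (hint : IntervalIntegrable h MeasureTheory.volume c a)
    (hH : ∀ t, H t = t * h t - ∫ y in c..t, h y) (hab : a ≤ b)
    (haff : ∀ x ∈ Icc a b, h x = h a + s * (x - a)) {z : ℝ} (hz : z ∈ Icc (0 : ℝ) 1) :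
    H (a + z * (b - a)) - ((1 - z) * H a + z * H b) =
      -(s / 2) * z * (1 - z) * (b - a) ^ 2 := by
  have hquad : ∀ t ∈ Icc a b, H t = H a + a * s * (t - a) + s / 2 * (t - a) ^ 2 := fun t ht =>
    mul_sub_integral_eq_of_affineOn hint hH ht.1 fun x hx => haff x ⟨hx.1, hx.2.trans ht.2⟩
  have hzab : z * (b - a) ≤ b - a := by nlinarith [hz.2]
  rw [hquad _ ⟨by nlinarith [hz.1], by linarith⟩, hquad b ⟨hab, le_rfl⟩]
  ring

end AffinePiece

theorem slope_mem_Icc_of_monotoneOn_of_lipschitz {h : ℝ → ℝ} {S : Set ℝ} {L a b : ℝ}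
    (hmono : MonotoneOn h S) (hlip : ∀ x y : ℝ, x ∈ S → y ∈ S → |h x - h y| ≤ L * |x - y|)
    (ha : a ∈ S) (hb : b ∈ S) (hab : a < b) : slope h a b ∈ Icc 0 L := by
  have hba : 0 < b - a := sub_pos.2 hab
  have hmono_ab : 0 ≤ h b - h a := sub_nonneg.2 (hmono ha hb hab.le)
  have hlip_ab := hlip b a hb ha
  rw [abs_of_nonneg hmono_ab, abs_of_pos hba] at hlip_ab
  rw [slope_def_field]
  exact ⟨by positivity, (div_le_iff₀ hba).2 hlip_ab⟩

theorem exists_nat_lt_intCast_floor_eq {n : ℕ} (hn : 0 < n) {q : ℝ}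
    (hq : q ∈ Ico (0 : ℝ) 1) :
    ∃ m : ℕ, m < n ∧ (⌊(n : ℝ) * q⌋ : ℝ) = m := by
  have hnq : 0 ≤ (n : ℝ) * q := mul_nonneg n.cast_nonneg hq.1
  refine ⟨⌊(n : ℝ) * q⌋₊, ?_, (natCast_floor_eq_intCast_floor hnq).symm⟩
  rw [Nat.floor_lt hnq]
  exact mul_lt_of_lt_one_right (by exact_mod_cast hn) hq.2

theorem neg_half_mul_mul_one_sub_mul_sq_mem_Icc {s z L δ : ℝ} (hs : s ∈ Icc 0 L)
    (hz : z ∈ Icc (0 : ℝ) 1) : -(s / 2) * z * (1 - z) * δ ^ 2 ∈ Icc (-(L * δ ^ 2) / 8) 0 := by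
  obtain ⟨hs0, hsL⟩ := hs
  obtain ⟨hz0, hz1⟩ := hz
  have hzz : z * (1 - z) ≤ 1 / 4 := by nlinarith [sq_nonneg (z - 1 / 2)]
  have hszz : 0 ≤ s * (z * (1 - z)) := by positivity
  have hszz' : s * (z * (1 - z)) ≤ L / 4 := by nlinarith
  constructor <;> nlinarith [sq_nonneg δ]

theorem stmt_9_general (n : ℕ) (hn : 0 < n) (h : ℝ → ℝ)
    (hmono : MonotoneOn h (Icc 0 (1 + 1 / n)))
    (hlip : ∀ x y : ℝ, x ∈ Icc (0:ℝ) (1 + 1 / n) → y ∈ Icc (0:ℝ) (1 + 1 / n) →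
      |h x - h y| ≤ 2 * |x - y|)
    (haffine : ∀ i : ℕ, i ≤ n → ∀ x ∈ Icc ((i : ℝ) / n) ((i + 1) / n),
      h x = h (i / n) + (x - i / n) * n * (h ((i + 1) / n) - h (i / n)))
    (q qbar qhat z : ℝ) (hq : q ∈ Ico (0:ℝ) 1)
    (hqbar : qbar = (⌊(n : ℝ) * q⌋ : ℝ) / n)
    (hz : z = n * q - n * qbar)
    (hqhat : qhat = qbar + 1 / n)
    (H : ℝ → ℝ) (hH : ∀ t, H t = t * h t - ∫ y in (0:ℝ)..t, h y) :
    -3 / (4 * n ^ 2) ≤ H q - ((1 - z) * H qbar + z * H qhat) ∧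
    H q - ((1 - z) * H qbar + z * H qhat) ≤ 0 := by
  have hn' : (0 : ℝ) < n := by exact_mod_cast hn
  obtain ⟨m, hmn, hfloor⟩ := exists_nat_lt_intCast_floor_eq hn hq
  have hqbar' : qbar = m / n := by rw [hqbar, hfloor]
  have hqhat' : qhat = (m + 1) / n := by rw [hqhat, hqbar']; field_simp
  have hδ : qhat - qbar = 1 / n := by rw [hqhat, add_sub_cancel_left]
  have hzI : z ∈ Icc (0 : ℝ) 1 := by
    have hz' : z = Int.fract ((n : ℝ) * q) := by rw [hz, hqbar, Int.fract]; field_simp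
    exact hz' ▸ ⟨Int.fract_nonneg _, (Int.fract_lt_one _).le⟩
  have hqz : q = qbar + z * (qhat - qbar) := by rw [hδ, hz]; field_simp; ring
  have hqbar0 : 0 ≤ qbar := by rw [hqbar']; positivity
  have hqq : qbar < qhat := by linarith [one_div_pos.2 hn']
  have hcell : Icc 0 qhat ⊆ Icc (0 : ℝ) (1 + 1 / n) := by
    have hqhat1 : qhat ≤ 1 := by rw [hqhat', div_le_one hn']; exact_mod_cast hmn
    exact Icc_subset_Icc le_rfl (by linarith [one_div_pos.2 hn'])
  have haff : ∀ x ∈ Icc qbar qhat,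
      h x = h qbar + slope h qbar qhat * (x - qbar) := by
    intro x hx
    rw [hqbar', hqhat'] at hx
    rw [haffine m hmn.le x hx, ← hqbar', ← hqhat', slope_def_field, hδ]
    field_simp
  have hs := slope_mem_Icc_of_monotoneOn_of_lipschitz hmono hlip (hcell ⟨hqbar0, hqq.le⟩)
    (hcell ⟨hqbar0.trans hqq.le, le_rfl⟩) hqq
  have hint : IntervalIntegrable h MeasureTheory.volume 0 qbar :=
    (hmono.mono ((uIcc_of_le hqbar0).trans_subset
      (hcell.trans' (Icc_subset_Icc le_rfl hqq.le)))).intervalIntegrable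
  rw [hqz, mul_sub_integral_interpolation_error hint hH hqq.le haff hzI]
  obtain ⟨hlow, hhigh⟩ := neg_half_mul_mul_one_sub_mul_sq_mem_Icc (δ := qhat - qbar) hs hzI
  refine ⟨le_trans ?_ hlow, hhigh⟩
  rw [hδ]
  field_simp
  norm_num

theorem stmt_9 (n : ℕ) (hn : 0 < n) (h : ℝ → ℝ)
    (hmono : MonotoneOn h (Icc 0 (1 + 1 / n)))
    (hrange : ∀ x ∈ Icc (0:ℝ) (1 + 1 / n), h x ∈ Icc (0:ℝ) 1)
    (hlip : ∀ x y : ℝ, x ∈ Icc (0:ℝ) (1 + 1 / n) → y ∈ Icc (0:ℝ) (1 + 1 / n) →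
      |h x - h y| ≤ 2 * |x - y|)
    (haffine : ∀ i : ℕ, i ≤ n → ∀ x ∈ Icc ((i : ℝ) / n) ((i + 1) / n),
      h x = h (i / n) + (x - i / n) * n * (h ((i + 1) / n) - h (i / n)))
    (q qbar qhat z : ℝ) (hq : q ∈ Ico (0:ℝ) 1)
    (hqbar : qbar = (⌊(n : ℝ) * q⌋ : ℝ) / n)
    (hz : z = n * q - n * qbar)
    (hqhat : qhat = qbar + 1 / n)
    (H : ℝ → ℝ) (hH : ∀ t, H t = t * h t - ∫ y in (0:ℝ)..t, h y) :
    -3 / (4 * n ^ 2) ≤ H q - ((1 - z) * H qbar + z * H qhat) ∧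
    H q - ((1 - z) * H qbar + z * H qhat) ≤ 0 :=
  stmt_9_general n hn h hmono hlip haffine q qbar qhat z hq hqbar hz hqhat H hH
end

section
/- For a nondecreasing function g : [0,1] → [0,1] that is 1-Lipschitz on the grid (g(x+1/n) − g(x) ≤ 1/n) and affine on each interval [i/n, (i+1)/n], fixed τ ∈ [0,1], and θ ∈ [0,1) with grid points θ̄ = ⌊nθ⌋/n, θ̂ = θ̄ + 1/n, z = nθ − nθ̄: the function G(θ) := −(1−τ)(1−θ)g(θ) satisfies G(θ) − ((1−z)·G(θ̄) + z·G(θ̂)) ≥ −1/(4n²). -/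
/-!
On the cell `[θ̄, θ̄ + 1/n]` the function `g` is affine, so `t ↦ (1 - t) g t` is a quadratic
with leading coefficient `-n (g θ̂ - g θ̄)`. Its deviation from the chord at `θ = θ̄ + z/n` is
therefore `z (1 - z) (g θ̂ - g θ̄) / n`, which is at most `1/(4n²)` because `z (1 - z) ≤ 1/4`
and the grid Lipschitz bound gives `g θ̂ - g θ̄ ≤ 1/n`; the factor `1 - τ ∈ [0, 1]` in `G` only
shrinks it.
-/

open Set

lemma mul_mul_one_sub_mul_le {c z d δ : ℝ} (hc : c ∈ Icc 0 1) (hz : z ∈ Icc 0 1)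
    (hd : d ≤ δ) (hδ : 0 ≤ δ) : c * (z * (1 - z)) * d ≤ δ / 4 := by
  have hw₀ : 0 ≤ c * (z * (1 - z)) := mul_nonneg hc.1 (mul_nonneg hz.1 (by linarith [hz.2]))
  have hw : c * (z * (1 - z)) ≤ 1 / 4 := by
    nlinarith [hc.1, hc.2, sq_nonneg (2 * z - 1), mul_nonneg hz.1 (sub_nonneg.2 hz.2)]
  calc c * (z * (1 - z)) * d ≤ c * (z * (1 - z)) * δ := mul_le_mul_of_nonneg_left hd hw₀
    _ ≤ 1 / 4 * δ := mul_le_mul_of_nonneg_right hw hδ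
    _ = δ / 4 := by ring

lemma exists_grid_cell {n : ℕ} (hn : 0 < n) {θ : ℝ} (hθ : θ ∈ Ico 0 1) :
    ∃ i < n, (⌊(n : ℝ) * θ⌋ : ℝ) = i ∧ n * θ - i ∈ Ico 0 1 ∧
      θ ∈ Icc ((i : ℝ) / n) ((i + 1) / n) := by
  have hn₀ : (0 : ℝ) < n := by exact_mod_cast hn
  have hnθ : 0 ≤ (n : ℝ) * θ := mul_nonneg hn₀.le hθ.1
  have hlo := Nat.floor_le hnθ
  have hhi := Nat.lt_floor_add_one ((n : ℝ) * θ)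
  refine ⟨⌊(n : ℝ) * θ⌋₊, ?_, (natCast_floor_eq_intCast_floor hnθ).symm,
    ⟨by linarith, by linarith⟩, ?_, ?_⟩
  · rw [Nat.floor_lt hnθ]
    exact mul_lt_of_lt_one_right hn₀ hθ.2
  · rw [div_le_iff₀ hn₀]; linarith
  · rw [le_div_iff₀ hn₀]; linarith

theorem stmt_12_general (n : ℕ) (hn : 0 < n) (g : ℝ → ℝ)
    (haffine : ∀ i : ℕ, i < n → ∀ x ∈ Icc ((i : ℝ) / n) ((i + 1) / n),
      g x = g (i / n) + (x - i / n) * n * (g ((i + 1) / n) - g (i / n)))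
    (hlipgrid : ∀ i : ℕ, i < n → g (((i : ℝ) + 1) / n) - g (i / n) ≤ 1 / n)
    (τ : ℝ) (hτ : τ ∈ Icc (0:ℝ) 1)
    (θ θbar θhat z : ℝ) (hθ : θ ∈ Ico (0:ℝ) 1)
    (hθbar : θbar = (⌊(n : ℝ) * θ⌋ : ℝ) / n)
    (hz : z = n * θ - n * θbar)
    (hθhat : θhat = θbar + 1 / n)
    (G : ℝ → ℝ) (hG : ∀ t, G t = -((1 - τ) * (1 - t) * g t)) :
    G θ - ((1 - z) * G θbar + z * G θhat) ≥ -1 / (4 * n ^ 2) := by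
  obtain ⟨i, hin, hfloor, hzi, hθ_mem⟩ := exists_grid_cell hn hθ
  have hθbar_eq : θbar = i / n := by rw [hθbar, hfloor]
  have hz_eq : z = n * θ - i := by rw [hz, hθbar_eq]; field_simp
  have hθ_eq : θ = θbar + z * (1 / n) := by rw [hz_eq, hθbar_eq]; field_simp; ring
  have hcell : θbar + 1 / n = (i + 1) / n := by rw [hθbar_eq, add_div]
  have hgθ : g θ = g θbar + z * (g θhat - g θbar) := by
    have hzn : (θ - i / n) * n = z := by rw [hz_eq]; field_simp
    rw [haffine i hin θ hθ_mem, hzn, hθhat, hcell, hθbar_eq]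
  have hgap : G θ - ((1 - z) * G θbar + z * G θhat)
      = -((1 - τ) * (z * (1 - z)) * (g θhat - g θbar) * (1 / n)) := by
    simp only [hG]
    rw [hgθ, hθ_eq, hθhat]
    ring
  have hlip : g θhat - g θbar ≤ 1 / n := by rw [hθhat, hcell, hθbar_eq]; exact hlipgrid i hin
  have hτ' : 1 - τ ∈ Icc (0 : ℝ) 1 := ⟨by linarith [hτ.2], by linarith [hτ.1]⟩
  have hbound := mul_mul_one_sub_mul_le hτ' (Ico_subset_Icc_self (hz_eq ▸ hzi)) hlip (by positivity)
  rw [hgap, ge_iff_le]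
  calc -1 / (4 * (n : ℝ) ^ 2) = -(1 / n / 4 * (1 / n)) := by field_simp
    _ ≤ _ := neg_le_neg (mul_le_mul_of_nonneg_right hbound (by positivity))

theorem stmt_12 (n : ℕ) (hn : 0 < n) (g : ℝ → ℝ)
    (hmono : MonotoneOn g (Icc 0 1))
    (hrange : ∀ x ∈ Icc (0:ℝ) 1, g x ∈ Icc (0:ℝ) 1)
    (haffine : ∀ i : ℕ, i < n → ∀ x ∈ Icc ((i : ℝ) / n) ((i + 1) / n),
      g x = g (i / n) + (x - i / n) * n * (g ((i + 1) / n) - g (i / n)))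
    (hlipgrid : ∀ i : ℕ, i < n → g (((i : ℝ) + 1) / n) - g (i / n) ≤ 1 / n)
    (τ : ℝ) (hτ : τ ∈ Icc (0:ℝ) 1)
    (θ θbar θhat z : ℝ) (hθ : θ ∈ Ico (0:ℝ) 1)
    (hθbar : θbar = (⌊(n : ℝ) * θ⌋ : ℝ) / n)
    (hz : z = n * θ - n * θbar)
    (hθhat : θhat = θbar + 1 / n)
    (G : ℝ → ℝ) (hG : ∀ t, G t = -((1 - τ) * (1 - t) * g t)) :
    G θ - ((1 - z) * G θbar + z * G θhat) ≥ -1 / (4 * n ^ 2) :=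
  stmt_12_general n hn g haffine hlipgrid τ hτ θ θbar θhat z hθ hθbar hz hθhat G hG
end

section
/- Suppose h : [0,1] → [0,1] is nondecreasing with h(0) = 0, h(1) = 1, and suppose the function q ↦ q·h(q) − ∫₀^q h(y) dy + 1 − q attains value at least Γ at every multiple of 1/n in [0,1] plus margin 3/(4n²), h is 2-Lipschitz on the grid, and h is affine on each grid interval. Then for every q ∈ [0,1], q·h(q) − ∫₀^q h(y) dy + 1 − q ≥ Γ. -/
/-!
Write `G q = q h(q) - ∫₀^q h + 1 - q`. On a grid cell `[a, b]` where `h` is affine with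
slope `m`, `G` is a quadratic with `G'' = m`, hence
`(b - a) G(q) = (b - q) G(a) + (q - a) G(b) - (b - a) m (q - a)(b - q) / 2`.
So `G` falls below the chord through its grid values by at most `m (b - a)² / 8 ≤ 1 / (4n²)`
(as `m ≤ 2` and `b - a = 1/n`), which the grid margin `3 / (4n²)` absorbs.
-/

open Set intervalIntegral

noncomputable def guarantee (h : ℝ → ℝ) (q : ℝ) : ℝ :=
  q * h q - (∫ y in (0:ℝ)..q, h y) + 1 - q

section AffineCell

variable {h : ℝ → ℝ} {a b c m q : ℝ}

theorem integral_eq_of_eqOn_affine (haq : a ≤ q)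
    (haff : ∀ y ∈ Icc a q, h y = c + (y - a) * m) :
    ∫ y in a..q, h y = (q - a) * c + (q - a) ^ 2 / 2 * m := by
  rw [integral_congr (g := fun y => c + (y - a) * m) (by rwa [uIcc_of_le haq]),
    integral_add intervalIntegrable_const (Continuous.intervalIntegrable (by fun_prop) _ _),
    integral_mul_const, integral_comp_sub_right (fun y => y)]
  simp

theorem intervalIntegrable_of_eqOn_affine (haq : a ≤ q)
    (haff : ∀ y ∈ Icc a q, h y = c + (y - a) * m) :
    IntervalIntegrable h MeasureTheory.volume a q :=
  (ContinuousOn.intervalIntegrable (u := fun y => c + (y - a) * m) (by fun_prop)).congr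
    (by rw [uIoc_of_le haq]; exact fun y hy => (haff y (Ioc_subset_Icc_self hy)).symm)

theorem guarantee_of_eqOn_affine (hint : IntervalIntegrable h MeasureTheory.volume 0 a)
    (haq : a ≤ q) (haff : ∀ y ∈ Icc a q, h y = h a + (y - a) * m) :
    guarantee h q = guarantee h a + (q - a) * (a * m - 1) + (q - a) ^ 2 / 2 * m := by
  have hq : h q = h a + (q - a) * m := haff q ⟨haq, le_rfl⟩
  rw [guarantee, guarantee, hq, ← integral_add_adjacent_intervals hint
    (intervalIntegrable_of_eqOn_affine haq haff), integral_eq_of_eqOn_affine haq haff]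
  ring

theorem guarantee_chord (hint : IntervalIntegrable h MeasureTheory.volume 0 a)
    (haq : a ≤ q) (hqb : q ≤ b) (haff : ∀ y ∈ Icc a b, h y = h a + (y - a) * m) :
    (b - a) * guarantee h q = (b - q) * guarantee h a + (q - a) * guarantee h b
      - (b - a) * (m / 2 * ((q - a) * (b - q))) := by
  have hab : a ≤ b := haq.trans hqb
  rw [guarantee_of_eqOn_affine hint haq fun y hy => haff y ⟨hy.1, hy.2.trans hqb⟩,
    guarantee_of_eqOn_affine hint hab haff]
  ring

theorem le_guarantee_of_eqOn_affine {Γ ε : ℝ}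
    (hint : IntervalIntegrable h MeasureTheory.volume 0 a) (hab : a < b) (hq : q ∈ Icc a b)
    (haff : ∀ y ∈ Icc a b, h y = h a + (y - a) * m)
    (hε : 0 ≤ ε) (hmε : m * (b - a) ^ 2 / 8 ≤ ε)
    (ha : Γ + ε ≤ guarantee h a) (hb : Γ + ε ≤ guarantee h b) :
    Γ ≤ guarantee h q := by
  obtain ⟨haq, hqb⟩ := hq
  have hchord := guarantee_chord hint haq hqb haff
  have hamgm : (q - a) * (b - q) ≤ (b - a) ^ 2 / 4 := by nlinarith [sq_nonneg (q - a - (b - q))]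
  have hcorr : m / 2 * ((q - a) * (b - q)) ≤ ε := by
    rcases le_total 0 m with hm | hm
    · nlinarith [mul_le_mul_of_nonneg_left hamgm hm]
    · nlinarith [mul_nonneg (sub_nonneg.2 haq) (sub_nonneg.2 hqb)]
  nlinarith [mul_le_mul_of_nonneg_left ha (sub_nonneg.2 hqb),
    mul_le_mul_of_nonneg_left hb (sub_nonneg.2 haq),
    mul_le_mul_of_nonneg_left hcorr (sub_nonneg.2 hab.le)]

end AffineCell

theorem exists_lt_mem_Icc_div {n : ℕ} (hn : 0 < n) {q : ℝ} (hq : q ∈ Icc (0:ℝ) 1) :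
    ∃ i < n, q ∈ Icc ((i : ℝ) / n) ((i + 1) / n) := by
  have hN : (0:ℝ) < n := by exact_mod_cast hn
  simp only [mem_Icc, div_le_iff₀ hN, le_div_iff₀ hN]
  rcases hq.2.eq_or_lt with rfl | hq1
  · refine ⟨n - 1, by omega, ?_, ?_⟩ <;> simp [Nat.cast_sub (Nat.one_le_iff_ne_zero.2 hn.ne')]
  · have hfloor : (⌊q * n⌋₊ : ℝ) < n :=
      (Nat.floor_le (mul_nonneg hq.1 hN.le)).trans_lt (by nlinarith)
    exact ⟨⌊q * n⌋₊, by exact_mod_cast hfloor, Nat.floor_le (mul_nonneg hq.1 hN.le),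
      (Nat.lt_floor_add_one _).le⟩

theorem stmt_13_general (n : ℕ) (hn : 0 < n) (Γ : ℝ) (h : ℝ → ℝ)
    (hmono : MonotoneOn h (Icc 0 1))
    (haffine : ∀ i : ℕ, i < n → ∀ x ∈ Icc ((i : ℝ) / n) ((i + 1) / n),
      h x = h (i / n) + (x - i / n) * n * (h ((i + 1) / n) - h (i / n)))
    (hlipgrid : ∀ i : ℕ, i < n → h (((i : ℝ) + 1) / n) - h ((i : ℝ) / n) ≤ 2 / n)
    (hgrid : ∀ i : ℕ, i ≤ n →
      ((i : ℝ) / n) * h ((i : ℝ) / n) - (∫ y in (0:ℝ)..((i : ℝ) / n), h y) +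
        1 - (i : ℝ) / n ≥ Γ + 3 / (4 * n ^ 2)) :
    ∀ q ∈ Icc (0:ℝ) 1,
      q * h q - (∫ y in (0:ℝ)..q, h y) + 1 - q ≥ Γ := by
  intro q hq
  obtain ⟨i, hin, hqi⟩ := exists_lt_mem_Icc_div hn hq
  have hN : (0:ℝ) < n := by exact_mod_cast hn
  have hi1 : ((i : ℝ) + 1) ≤ n := by exact_mod_cast hin
  have hint : IntervalIntegrable h MeasureTheory.volume 0 ((i : ℝ) / n) := by
    refine (hmono.mono ?_).intervalIntegrable
    rw [uIcc_of_le (by positivity)]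
    exact Icc_subset_Icc le_rfl (div_le_one_of_le₀ (by linarith) hN.le)
  have hloss :
      n * (h ((i + 1) / n) - h (i / n)) * ((i + 1) / n - i / n) ^ 2 / 8 ≤ 3 / (4 * n ^ 2) := by
    have hlip := hlipgrid i hin
    rw [div_sub_div_same, add_sub_cancel_left, div_pow, le_div_iff₀ (by positivity)]
    field_simp
    rw [le_div_iff₀ hN] at hlip
    nlinarith
  exact le_guarantee_of_eqOn_affine hint (by gcongr; linarith) hqi
    (fun x hx => by rw [haffine i hin x hx, mul_assoc]) (by positivity) hloss
    (hgrid i hin.le) (by simpa [guarantee] using hgrid (i + 1) hin)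

theorem stmt_13 (n : ℕ) (hn : 0 < n) (Γ : ℝ) (h : ℝ → ℝ)
    (hmono : MonotoneOn h (Icc 0 1))
    (hrange : ∀ x ∈ Icc (0:ℝ) 1, h x ∈ Icc (0:ℝ) 1)
    (h0 : h 0 = 0) (h1 : h 1 = 1)
    (haffine : ∀ i : ℕ, i < n → ∀ x ∈ Icc ((i : ℝ) / n) ((i + 1) / n),
      h x = h (i / n) + (x - i / n) * n * (h ((i + 1) / n) - h (i / n)))
    (hlipgrid : ∀ i : ℕ, i < n → h (((i : ℝ) + 1) / n) - h ((i : ℝ) / n) ≤ 2 / n)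
    (hgrid : ∀ i : ℕ, i ≤ n →
      ((i : ℝ) / n) * h ((i : ℝ) / n) - (∫ y in (0:ℝ)..((i : ℝ) / n), h y) +
        1 - (i : ℝ) / n ≥ Γ + 3 / (4 * n ^ 2)) :
    ∀ q ∈ Icc (0:ℝ) 1,
      q * h q - (∫ y in (0:ℝ)..q, h y) + 1 - q ≥ Γ :=
  stmt_13_general n hn Γ h hmono haffine hlipgrid hgrid
end

section
/- Let g : [0,1] → [0,1] be nondecreasing. For all τ, γ ∈ [0,1], the quantity G₂(τ,γ) = ∫₀^τ g(y) dy + ∫₀^γ g(y) dy + (1−τ)(1−γ) is at least min over grid points: if g is affine on each interval [i/n,(i+1)/n], 1-Lipschitz on the grid, and G₂(τ̄,γ̄) ≥ L + 1/(4n²) for all grid points τ̄, γ̄ ∈ {0,1/n,...,1}, then G₂(τ,γ) ≥ L for all τ, γ ∈ [0,1]. -/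
/-!
For fixed `γ`, on a grid cell `[i/n, (i+1)/n]` the map `τ ↦ G₂(τ, γ)` is a quadratic in `τ`
whose leading coefficient is `m/2` with `m = n (g((i+1)/n) - g(i/n)) ∈ [0, 1]`. A convex
quadratic with that curvature falls below the smaller of its endpoint values by at most
`m h² / 8 ≤ 1/(8n²)` on a cell of width `h = 1/n`. Discretizing first `τ` and then `γ` (using
the symmetry of `G₂`) costs `1/(8n²)` twice, which is the margin `1/(4n²)` in the hypothesis.
-/

open Set intervalIntegral

lemma min_sub_le_quadratic {m c h x : ℝ} (hm : 0 ≤ m) (hx₀ : 0 ≤ x) (hxh : x ≤ h) :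
    min 0 (c * h + m * h ^ 2 / 2) - m * h ^ 2 / 8 ≤ c * x + m * x ^ 2 / 2 := by
  obtain rfl | hh := (hx₀.trans hxh).eq_or_lt
  · obtain rfl : x = 0 := le_antisymm hxh hx₀
    simp
  refine le_of_mul_le_mul_left ?_ hh
  have hmin : h * min 0 (c * h + m * h ^ 2 / 2) ≤ x * (c * h + m * h ^ 2 / 2) :=
    calc h * min 0 (c * h + m * h ^ 2 / 2)
        ≤ x * min 0 (c * h + m * h ^ 2 / 2) := mul_le_mul_of_nonpos_right hxh (min_le_left _ _)
      _ ≤ x * (c * h + m * h ^ 2 / 2) := mul_le_mul_of_nonneg_left (min_le_right _ _) hx₀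
  -- `h (c x + m x²/2) = x (c h + m h²/2) + (m h/2) x (x - h)` and `x (x - h) ≥ -h²/4`
  nlinarith [mul_nonneg (mul_nonneg hm hh.le) (sq_nonneg (x - h / 2))]

lemma integral_const_add_sub_mul (a C M t : ℝ) :
    ∫ y in a..t, (C + (y - a) * M) = C * (t - a) + M * (t - a) ^ 2 / 2 := by
  rw [integral_add intervalIntegrable_const
      ((by fun_prop : Continuous fun y : ℝ => (y - a) * M).intervalIntegrable _ _),
    integral_mul_const, integral_comp_sub_right (fun y => y)]
  simp
  ring

lemma min_sub_le_integral_sub_mul_of_affine {g : ℝ → ℝ} {a b k m x : ℝ} (hm : 0 ≤ m)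
    (haff : ∀ y ∈ Icc a b, g y = g a + (y - a) * m) (hx : x ∈ Icc a b) :
    min 0 ((∫ y in a..b, g y) - k * (b - a)) - m * (b - a) ^ 2 / 8 ≤
      (∫ y in a..x, g y) - k * (x - a) := by
  have hint : ∀ t ∈ Icc a b, ∫ y in a..t, g y = g a * (t - a) + m * (t - a) ^ 2 / 2 := by
    intro t ht
    rw [← integral_const_add_sub_mul]
    refine integral_congr fun y hy => haff y ?_
    rw [uIcc_of_le ht.1] at hy
    exact ⟨hy.1, hy.2.trans ht.2⟩
  rw [hint b (right_mem_Icc.2 (hx.1.trans hx.2)), hint x hx]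
  convert min_sub_le_quadratic (c := g a - k) hm (sub_nonneg.2 hx.1) (sub_le_sub_right hx.2 a)
    using 3 <;> ring

lemma exists_grid_cell_s15 {n : ℕ} (hn : 0 < n) {σ : ℝ} (hσ : σ ∈ Icc (0 : ℝ) 1) :
    ∃ i < n, (i : ℝ) / n ≤ σ ∧ σ ≤ ((i : ℝ) + 1) / n := by
  have hn' : (0 : ℝ) < n := Nat.cast_pos.2 hn
  obtain hσ1 | rfl := hσ.2.lt_or_eq
  · refine ⟨⌊n * σ⌋₊, ?_, ?_, ?_⟩
    · exact (Nat.floor_lt' hn.ne').2 (by nlinarith)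
    · rw [div_le_iff₀' hn']
      exact Nat.floor_le (mul_nonneg hn'.le hσ.1)
    · rw [le_div_iff₀' hn']
      exact (Nat.lt_floor_add_one _).le
  · refine ⟨n - 1, Nat.sub_lt hn one_pos, ?_, ?_⟩
    · rw [div_le_one hn']
      exact_mod_cast Nat.sub_le n 1
    · rw [Nat.cast_pred hn, sub_add_cancel, div_self hn'.ne']

lemma sub_le_integral_sub_mul_of_grid {n : ℕ} (hn : 0 < n) {g : ℝ → ℝ}
    (hmono : MonotoneOn g (Icc 0 1))
    (haffine : ∀ i : ℕ, i < n → ∀ x ∈ Icc ((i : ℝ) / n) ((i + 1) / n),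
      g x = g (i / n) + (x - i / n) * n * (g ((i + 1) / n) - g (i / n)))
    (hlipgrid : ∀ i : ℕ, i < n → g (((i : ℝ) + 1) / n) - g ((i : ℝ) / n) ≤ 1 / n)
    {k K : ℝ} (hK : ∀ i : ℕ, i ≤ n → K ≤ (∫ y in (0 : ℝ)..(i / n), g y) - k * (i / n))
    {σ : ℝ} (hσ : σ ∈ Icc (0 : ℝ) 1) :
    K - 1 / (8 * n ^ 2) ≤ (∫ y in (0 : ℝ)..σ, g y) - k * σ := by
  have hn' : (0 : ℝ) < n := Nat.cast_pos.2 hn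
  obtain ⟨i, hi, haσ, hσb⟩ := exists_grid_cell_s15 hn hσ
  set a : ℝ := (i : ℝ) / n
  set b : ℝ := ((i : ℝ) + 1) / n
  have hba : b - a = 1 / n := by simp only [a, b]; field_simp; ring
  have ha : a ∈ Icc (0 : ℝ) 1 := ⟨by positivity, (div_le_one hn').2 (by exact_mod_cast hi.le)⟩
  have hb : b ∈ Icc (0 : ℝ) 1 := ⟨by positivity, (div_le_one hn').2 (by exact_mod_cast hi)⟩
  have hsplit : ∀ t ∈ Icc a b,
      ∫ y in (0 : ℝ)..t, g y = (∫ y in (0 : ℝ)..a, g y) + ∫ y in a..t, g y := by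
    intro t ht
    have ht01 : t ∈ Icc (0 : ℝ) 1 := ⟨ha.1.trans ht.1, ht.2.trans hb.2⟩
    have hint : ∀ u v, u ∈ Icc (0 : ℝ) 1 → v ∈ Icc (0 : ℝ) 1 →
        IntervalIntegrable g MeasureTheory.volume u v := fun u v hu hv =>
      (hmono.mono (uIcc_subset_Icc hu hv)).intervalIntegrable
    exact (integral_add_adjacent_intervals (hint 0 a (left_mem_Icc.2 zero_le_one) ha)
      (hint a t ha ht01)).symm
  have hm : 0 ≤ n * (g b - g a) :=
    mul_nonneg hn'.le (sub_nonneg.2 (hmono ha hb (by linarith)))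
  have hcell := min_sub_le_integral_sub_mul_of_affine (g := g) (k := k) hm
    (fun y hy => by rw [haffine i hi y hy]; ring) ⟨haσ, hσb⟩
  have hloss : n * (g b - g a) * (b - a) ^ 2 / 8 ≤ 1 / (8 * n ^ 2) := by
    rw [hba, show (1 : ℝ) / (8 * n ^ 2) = n * (1 / n) * (1 / n) ^ 2 / 8 by field_simp]
    gcongr
    exact hlipgrid i hi
  have hKb : K ≤ (∫ y in (0 : ℝ)..b, g y) - k * b := by
    simpa [b] using hK (i + 1) hi
  have hmin : K - ((∫ y in (0 : ℝ)..a, g y) - k * a) ≤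
      min 0 ((∫ y in a..b, g y) - k * (b - a)) :=
    le_min (by linarith [hK i hi.le]) (by linarith [hsplit b (right_mem_Icc.2 (by linarith))])
  linarith [hsplit σ ⟨haσ, hσb⟩]

theorem stmt_15_general (n : ℕ) (hn : 0 < n) (L : ℝ) (g : ℝ → ℝ)
    (hmono : MonotoneOn g (Icc 0 1))
    (haffine : ∀ i : ℕ, i < n → ∀ x ∈ Icc ((i : ℝ) / n) ((i + 1) / n),
      g x = g (i / n) + (x - i / n) * n * (g ((i + 1) / n) - g (i / n)))
    (hlipgrid : ∀ i : ℕ, i < n → g (((i : ℝ) + 1) / n) - g ((i : ℝ) / n) ≤ 1 / n)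
    (G₂ : ℝ → ℝ → ℝ)
    (hG₂ : ∀ τ γ : ℝ, G₂ τ γ =
      (∫ y in (0:ℝ)..τ, g y) + (∫ y in (0:ℝ)..γ, g y) + (1 - τ) * (1 - γ))
    (hgrid : ∀ i j : ℕ, i ≤ n → j ≤ n →
      G₂ ((i : ℝ) / n) ((j : ℝ) / n) ≥ L + 1 / (4 * n ^ 2)) :
    ∀ τ ∈ Icc (0:ℝ) 1, ∀ γ ∈ Icc (0:ℝ) 1, G₂ τ γ ≥ L := by
  have hsymm : ∀ s t, G₂ s t = G₂ t s := fun s t => by rw [hG₂, hG₂]; ring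
  have hslice : ∀ γ K, (∀ i : ℕ, i ≤ n → K ≤ G₂ (i / n) γ) →
      ∀ σ ∈ Icc (0 : ℝ) 1, K - 1 / (8 * n ^ 2) ≤ G₂ σ γ := by
    intro γ K hK σ hσ
    have hG : ∀ t, G₂ t γ = (∫ y in (0 : ℝ)..t, g y) - (1 - γ) * t +
        ((∫ y in (0 : ℝ)..γ, g y) + (1 - γ)) := fun t => by rw [hG₂]; ring
    have := sub_le_integral_sub_mul_of_grid hn hmono haffine hlipgrid
      (k := 1 - γ) (K := K - ((∫ y in (0 : ℝ)..γ, g y) + (1 - γ)))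
      (fun i hi => by linarith [hK i hi, hG (i / n)]) hσ
    linarith [hG σ]
  have hhalf : (1 : ℝ) / (4 * n ^ 2) = 1 / (8 * n ^ 2) + 1 / (8 * n ^ 2) := by ring
  intro τ hτ γ hγ
  have hcol : ∀ j : ℕ, j ≤ n → L + 1 / (8 * n ^ 2) ≤ G₂ (j / n) τ := fun j hj => by
    rw [hsymm]
    linarith [hslice _ _ (fun i hi => hgrid i j hi hj) τ hτ]
  rw [hsymm]
  linarith [hslice τ _ hcol γ hγ]

theorem stmt_15 (n : ℕ) (hn : 0 < n) (L : ℝ) (g : ℝ → ℝ)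
    (hmono : MonotoneOn g (Icc 0 1))
    (hrange : ∀ x ∈ Icc (0:ℝ) 1, g x ∈ Icc (0:ℝ) 1)
    (haffine : ∀ i : ℕ, i < n → ∀ x ∈ Icc ((i : ℝ) / n) ((i + 1) / n),
      g x = g (i / n) + (x - i / n) * n * (g ((i + 1) / n) - g (i / n)))
    (hlipgrid : ∀ i : ℕ, i < n → g (((i : ℝ) + 1) / n) - g ((i : ℝ) / n) ≤ 1 / n)
    (G₂ : ℝ → ℝ → ℝ)
    (hG₂ : ∀ τ γ : ℝ, G₂ τ γ =
      (∫ y in (0:ℝ)..τ, g y) + (∫ y in (0:ℝ)..γ, g y) + (1 - τ) * (1 - γ))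
    (hgrid : ∀ i j : ℕ, i ≤ n → j ≤ n →
      G₂ ((i : ℝ) / n) ((j : ℝ) / n) ≥ L + 1 / (4 * n ^ 2)) :
    ∀ τ ∈ Icc (0:ℝ) 1, ∀ γ ∈ Icc (0:ℝ) 1, G₂ τ γ ≥ L :=
  stmt_15_general n hn L g hmono haffine hlipgrid G₂ hG₂ hgrid
end
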